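/- (Semi-gradient Stackelberg gradient equals the policy gradient.) Assume μ0(s) > 0 for all s and π_θ(s,a) > 0 for all (s,a), and fix q ∈ ℝ^{S×A}. Define the actor objective J_π(θ,q) := (1−γ) μ0ᵀ Π_θ q, the semi-gradient of the critic loss ∂_q^semi J_q := −Δ(d_θ)(r − Ψ_θ q), the semi-Hessian (∂_q^semi)² J_q := Δ(d_θ) (invertible since d_θ has positive entries), and ∂_q^semi J_π := d_θ. Let M^semi ∈ ℝ^{n × (S×A)} be the Jacobian in θ of the map θ ↦ −Δ(d_θ)(r − Ψ_θ q) with q held fixed. Then g^semi := ∂_θ J_π(θ,q) − M^semi · Δ(d_θ)⁻¹ · d_θ satisfies g^semi = ∂_θ J_π(θ,q) + ∇_θ (d_θᵀ (r − Ψ_θ q)) = ∇_θ J(θ), the true policy gradient of J(θ) := d_θᵀ r. -/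

import Mathlib

open Matrix

noncomputable section

variable {S A : Type*} [Fintype S] [Fintype A] [DecidableEq S] [DecidableEq A]
  [Nonempty S] [Nonempty A]

/-- A policy: nonnegative entries, and for each state the action probabilities sum to one. -/
def IsPolicy (x : S × A → ℝ) : Prop :=
  (∀ p, 0 ≤ x p) ∧ ∀ s : S, ∑ a : A, x (s, a) = 1

/-- A row-stochastic transition matrix. -/
def IsStochasticMat (P : Matrix (S × A) S ℝ) : Prop :=
  (∀ p s, 0 ≤ P p s) ∧ ∀ p, ∑ s : S, P p s = 1

/-- A probability vector on states. -/
def IsProbVec (μ : S → ℝ) : Prop :=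
  (∀ s, 0 ≤ μ s) ∧ ∑ s : S, μ s = 1

/-- The block policy matrix `Π(x) ∈ ℝ^{S × (S×A)}`. -/
def piMat (x : S × A → ℝ) : Matrix S (S × A) ℝ :=
  Matrix.of fun s p => if p.1 = s then x p else 0

/-- The action-marginalization matrix `Ξ ∈ ℝ^{S × (S×A)}`. -/
def xiMat : Matrix S (S × A) ℝ :=
  Matrix.of fun s p => if p.1 = s then (1 : ℝ) else 0

/-- `Ψ(x) = I - γ P Π(x)`. -/
def psiMat (P : Matrix (S × A) S ℝ) (γ : ℝ) (x : S × A → ℝ) :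
    Matrix (S × A) (S × A) ℝ :=
  1 - γ • (P * piMat x)

/-- The discounted state-action occupancy `d(x) = (1-γ)(Ψ(x)ᵀ)⁻¹ Π(x)ᵀ μ0`. -/
def dOcc (P : Matrix (S × A) S ℝ) (γ : ℝ) (μ0 : S → ℝ) (x : S × A → ℝ) :
    S × A → ℝ :=
  (1 - γ) • (((psiMat P γ x)ᵀ)⁻¹ *ᵥ ((piMat x)ᵀ *ᵥ μ0))

/-
Since `d_θ` has positive entries, `Δ(d_θ)⁻¹ d_θ` is the all-ones vector, so `M^semi Δ(d_θ)⁻¹ d_θ`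
adds up the columns of the Jacobian of `θ ↦ -Δ(d_θ)(r - Ψ_θ q)`: it is the gradient of
`-d_θᵀ(r - Ψ_θ q)`. The flow identity `Ψ_θᵀ d_θ = (1 - γ) Π_θᵀ μ0` turns `d_θᵀ Ψ_θ q` into
`J_π(θ, q)`, hence `d_θᵀ(r - Ψ_θ q) = d_θᵀ r - J_π(θ, q)`, and differentiating gives both
equalities. Positivity of `d_θ` comes from the Neumann series of `(I - γ P Π_θ)⁻¹`, whose entries
dominate those of the identity.
-/

namespace Matrix

variable {ι : Type*} [Fintype ι] [DecidableEq ι]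

section LinftyOp

attribute [local instance] Matrix.linftyOpNormedRing Matrix.linftyOpNormedAlgebra

private theorem norm_lt_one_of_rowSum_lt_one {M : Matrix ι ι ℝ} (hM : ∀ i j, 0 ≤ M i j)
    (hrow : ∀ i, ∑ j, M i j < 1) : ‖M‖ < 1 := by
  rw [linfty_opNorm_def, ← NNReal.coe_one, NNReal.coe_lt_coe,
    Finset.sup_lt_iff (by norm_num)]
  intro i _
  rw [← NNReal.coe_lt_coe]
  push_cast
  simpa [Real.norm_eq_abs, abs_of_nonneg (hM i _)] using hrow i

theorem isUnit_one_sub_of_rowSum_lt_one {M : Matrix ι ι ℝ} (hM : ∀ i j, 0 ≤ M i j)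
    (hrow : ∀ i, ∑ j, M i j < 1) : IsUnit (1 - M) :=
  isUnit_one_sub_of_norm_lt_one (norm_lt_one_of_rowSum_lt_one hM hrow)

theorem one_apply_le_inv_one_sub_apply {M : Matrix ι ι ℝ} (hM : ∀ i j, 0 ≤ M i j)
    (hrow : ∀ i, ∑ j, M i j < 1) (i j : ι) : (1 : Matrix ι ι ℝ) i j ≤ (1 - M)⁻¹ i j := by
  have hpow : ∀ k : ℕ, 0 ≤ (M ^ k) i j := by
    intro k
    induction k generalizing j with
    | zero => rw [pow_zero, one_apply]; split_ifs <;> norm_num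
    | succ k ih =>
      rw [pow_succ, mul_apply]
      exact Finset.sum_nonneg fun l _ => mul_nonneg (ih l) (hM l j)
  have hsum := Pi.hasSum.mp (Pi.hasSum.mp (hasSum_geom_series_inverse M
    (norm_lt_one_of_rowSum_lt_one hM hrow)) i) j
  rw [nonsing_inv_eq_ringInverse]
  simpa using le_hasSum hsum 0 fun k _ => hpow k

variable {E : Type*} [NormedAddCommGroup E] [NormedSpace ℝ E]

theorem differentiableAt_inv_apply {f : E → Matrix ι ι ℝ} {x : E}
    (hf : ∀ i j, DifferentiableAt ℝ (fun t => f t i j) x) (hx : IsUnit (f x).det) (i j : ι) :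
    DifferentiableAt ℝ (fun t => (f t)⁻¹ i j) x := by
  let e : Matrix ι ι ℝ ≃L[ℝ] (ι → ι → ℝ) :=
    (ofLinearEquiv ℝ).symm.toContinuousLinearEquiv
  have hfx : DifferentiableAt ℝ f x :=
    e.comp_differentiableAt_iff.mp (differentiableAt_pi.mpr fun i =>
      differentiableAt_pi.mpr fun j => hf i j)
  have hinv : DifferentiableAt ℝ (fun t => (f t)⁻¹) x := by
    simp only [nonsing_inv_eq_ringInverse]
    exact hfx.inverse ((isUnit_iff_isUnit_det _).mpr hx)
  exact differentiableAt_pi.mp (differentiableAt_pi.mp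
    (e.comp_differentiableAt_iff.mpr hinv) i) j

end LinftyOp

theorem inv_diagonal_mulVec_self {v : ι → ℝ} (hv : ∀ i, v i ≠ 0) : (diagonal v)⁻¹ *ᵥ v = 1 := by
  have hunit : IsUnit v := Pi.isUnit_iff.mpr fun i => (hv i).isUnit
  ext i
  rw [inv_diagonal, mulVec_diagonal]
  exact congrFun (Ring.inverse_mul_cancel v hunit) i

variable {m n : Type*} [Fintype n] {E : Type*} [NormedAddCommGroup E] [NormedSpace ℝ E]

theorem differentiableAt_mulVec {M : E → Matrix m n ℝ} {v : E → n → ℝ} {x : E}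
    (hM : ∀ i j, DifferentiableAt ℝ (fun t => M t i j) x) (hv : DifferentiableAt ℝ v x) :
    DifferentiableAt ℝ (fun t => M t *ᵥ v t) x := by
  refine differentiableAt_pi.mpr fun i => ?_
  simp only [mulVec, dotProduct]
  fun_prop

end Matrix

section Calculus

variable {ι : Type*} [Fintype ι] {E : Type*} [NormedAddCommGroup E] [NormedSpace ℝ E]

theorem differentiableAt_dotProduct {u v : E → ι → ℝ} {x : E} (hu : DifferentiableAt ℝ u x)
    (hv : DifferentiableAt ℝ v x) : DifferentiableAt ℝ (fun t => u t ⬝ᵥ v t) x := by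
  simp only [dotProduct]
  fun_prop

theorem sum_fderiv_apply {F : E → ι → ℝ} {x : E} (hF : DifferentiableAt ℝ F x) (v : E) :
    ∑ p, fderiv ℝ F x v p = fderiv ℝ (fun t => ∑ p, F t p) x v := by
  rw [fderiv_fun_sum fun p _ => differentiableAt_pi.mp hF p]
  simp [fderiv_apply hF]

variable {κ : Type*} [Fintype κ] [DecidableEq κ]

theorem jacobian_mulVec_one {F : (κ → ℝ) → ι → ℝ} {x : κ → ℝ} (hF : DifferentiableAt ℝ F x) :
    (Matrix.of fun j p => fderiv ℝ F x (Pi.single j 1) p) *ᵥ 1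
      = fun j => fderiv ℝ (fun t => ∑ p, F t p) x (Pi.single j 1) := by
  ext j
  simp [Matrix.mulVec, dotProduct, sum_fderiv_apply hF]

theorem jacobian_neg_diagonal_mulVec_mulVec_inv_diagonal_self [DecidableEq ι]
    {d g : (κ → ℝ) → ι → ℝ} {x : κ → ℝ} (hd : DifferentiableAt ℝ d x)
    (hg : DifferentiableAt ℝ g x) (hdx : ∀ p, d x p ≠ 0) :
    (Matrix.of fun j p => fderiv ℝ (fun t => -(Matrix.diagonal (d t) *ᵥ g t)) x (Pi.single j 1) p)
        *ᵥ ((Matrix.diagonal (d x))⁻¹ *ᵥ d x)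
      = fun j => -fderiv ℝ (fun t => d t ⬝ᵥ g t) x (Pi.single j 1) := by
  have hpointwise : (fun t => -(Matrix.diagonal (d t) *ᵥ g t)) = fun t => -(d t * g t) := by
    ext t p
    simp [Matrix.mulVec_diagonal]
  rw [Matrix.inv_diagonal_mulVec_self hdx, hpointwise,
    jacobian_mulVec_one (F := fun t => -(d t * g t)) (hd.mul hg).neg]
  ext j
  simp only [Pi.neg_apply, Pi.mul_apply, Finset.sum_neg_distrib]
  rw [fderiv_fun_neg]
  rfl

end Calculus

section MDP

omit [Nonempty S] [Nonempty A]

variable {P : Matrix (S × A) S ℝ} {γ : ℝ} {x : S × A → ℝ}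

omit [Fintype A] [DecidableEq A] in
theorem mul_piMat_apply (P : Matrix (S × A) S ℝ) (x : S × A → ℝ) (p p' : S × A) :
    (P * piMat x) p p' = P p p'.1 * x p' := by
  simp [mul_apply, piMat, mul_ite]

omit [Fintype A] in
theorem psiMat_apply (P : Matrix (S × A) S ℝ) (γ : ℝ) (x : S × A → ℝ) (p p' : S × A) :
    psiMat P γ x p p' = (1 : Matrix (S × A) (S × A) ℝ) p p' - γ * (P p p'.1 * x p') := by
  simp [psiMat, mul_piMat_apply]

omit [DecidableEq A] in
theorem smul_mul_piMat_nonneg (hP : IsStochasticMat P) (hx : IsPolicy x) (hγ0 : 0 ≤ γ)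
    (p p' : S × A) : 0 ≤ (γ • (P * piMat x)) p p' := by
  rw [Matrix.smul_apply, mul_piMat_apply, smul_eq_mul]
  exact mul_nonneg hγ0 (mul_nonneg (hP.1 _ _) (hx.1 _))

omit [DecidableEq A] in
theorem sum_smul_mul_piMat_apply (hP : IsStochasticMat P) (hx : IsPolicy x) (p : S × A) :
    ∑ p', (γ • (P * piMat x)) p p' = γ := by
  simp only [Matrix.smul_apply, mul_piMat_apply, smul_eq_mul, ← Finset.mul_sum,
    Fintype.sum_prod_type, hx.2, mul_one, hP.2]

theorem isUnit_det_psiMat (hP : IsStochasticMat P) (hx : IsPolicy x) (hγ0 : 0 ≤ γ)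
    (hγ1 : γ < 1) : IsUnit (psiMat P γ x).det :=
  (isUnit_iff_isUnit_det _).mp <| isUnit_one_sub_of_rowSum_lt_one
    (smul_mul_piMat_nonneg hP hx hγ0) fun p => (sum_smul_mul_piMat_apply hP hx p).trans_lt hγ1

omit [Fintype A] [DecidableEq A] in
theorem piMat_transpose_mulVec_apply (x : S × A → ℝ) (μ0 : S → ℝ) (p : S × A) :
    ((piMat x)ᵀ *ᵥ μ0) p = x p * μ0 p.1 := by
  simp [mulVec, dotProduct, piMat, ite_mul]

theorem dOcc_pos (hP : IsStochasticMat P) (hx : IsPolicy x) (hγ0 : 0 ≤ γ) (hγ1 : γ < 1)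
    {μ0 : S → ℝ} (hxpos : ∀ p, 0 < x p) (hμ0pos : ∀ s, 0 < μ0 s) (p : S × A) :
    0 < dOcc P γ μ0 x p := by
  set w := (piMat x)ᵀ *ᵥ μ0 with hw_def
  have hw : ∀ p, 0 < w p := fun p => by
    rw [hw_def, piMat_transpose_mulVec_apply]; exact mul_pos (hxpos p) (hμ0pos p.1)
  have hle : ∀ j, (1 : Matrix (S × A) (S × A) ℝ) j p ≤ (psiMat P γ x)⁻¹ j p :=
    fun j => one_apply_le_inv_one_sub_apply (smul_mul_piMat_nonneg hP hx hγ0)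
      (fun p => (sum_smul_mul_piMat_apply hP hx p).trans_lt hγ1) j p
  have hwp : w p ≤ ((psiMat P γ x)ᵀ⁻¹ *ᵥ w) p := calc
    w p = ∑ j, (1 : Matrix (S × A) (S × A) ℝ) j p * w j := by simp [one_apply]
    _ ≤ ∑ j, (psiMat P γ x)⁻¹ j p * w j :=
      Finset.sum_le_sum fun j _ => mul_le_mul_of_nonneg_right (hle j) (hw j).le
    _ = ((psiMat P γ x)ᵀ⁻¹ *ᵥ w) p := by
      simp [← transpose_nonsing_inv, mulVec, dotProduct]
  simp only [dOcc, Pi.smul_apply, smul_eq_mul]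
  exact mul_pos (by linarith) ((hw p).trans_le hwp)

theorem dOcc_dotProduct_psiMat_mulVec (hP : IsStochasticMat P) (hx : IsPolicy x) (hγ0 : 0 ≤ γ)
    (hγ1 : γ < 1) (μ0 : S → ℝ) (q : S × A → ℝ) :
    dOcc P γ μ0 x ⬝ᵥ (psiMat P γ x *ᵥ q) = (1 - γ) * (μ0 ⬝ᵥ (piMat x *ᵥ q)) := by
  have hdetT : IsUnit (psiMat P γ x)ᵀ.det := by
    rw [det_transpose]; exact isUnit_det_psiMat hP hx hγ0 hγ1
  rw [dotProduct_mulVec, ← mulVec_transpose, dOcc, mulVec_smul, mulVec_mulVec,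
    mul_nonsing_inv _ hdetT, one_mulVec, smul_dotProduct, mulVec_transpose,
    ← dotProduct_mulVec, smul_eq_mul]

variable {E : Type*} [NormedAddCommGroup E] [NormedSpace ℝ E] {π : E → S × A → ℝ} {θ : E}

omit [DecidableEq A] in
theorem differentiableAt_piMat_apply (hπ : DifferentiableAt ℝ π θ) (s : S) (p : S × A) :
    DifferentiableAt ℝ (fun t => piMat (π t) s p) θ := by
  simp only [piMat, of_apply]
  split_ifs <;> fun_prop

theorem differentiableAt_psiMat_apply (P : Matrix (S × A) S ℝ) (γ : ℝ)
    (hπ : DifferentiableAt ℝ π θ) (p p' : S × A) :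
    DifferentiableAt ℝ (fun t => psiMat P γ (π t) p p') θ := by
  simp only [psiMat_apply]
  fun_prop

theorem differentiableAt_dOcc (hP : IsStochasticMat P) (hγ0 : 0 ≤ γ) (hγ1 : γ < 1) (μ0 : S → ℝ)
    (hπθ : IsPolicy (π θ)) (hπ : DifferentiableAt ℝ π θ) :
    DifferentiableAt ℝ (fun t => dOcc P γ μ0 (π t)) θ := by
  have hinv := differentiableAt_inv_apply (f := fun t => (psiMat P γ (π t))ᵀ)
    (fun i j => differentiableAt_psiMat_apply P γ hπ j i)
    (by rw [det_transpose]; exact isUnit_det_psiMat hP hπθ hγ0 hγ1)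
  unfold dOcc
  exact (differentiableAt_mulVec hinv (differentiableAt_mulVec
    (fun i j => differentiableAt_piMat_apply hπ j i) (differentiableAt_const μ0))).const_smul (1 - γ)

theorem fderiv_dOcc_dotProduct_sub_psiMat_mulVec (hP : IsStochasticMat P) (hγ0 : 0 ≤ γ)
    (hγ1 : γ < 1) (r : S × A → ℝ) (μ0 : S → ℝ) (q : S × A → ℝ) (hpol : ∀ t, IsPolicy (π t))
    (hπ : DifferentiableAt ℝ π θ) :
    fderiv ℝ (fun t => dOcc P γ μ0 (π t) ⬝ᵥ (r - psiMat P γ (π t) *ᵥ q)) θ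
      = fderiv ℝ (fun t => dOcc P γ μ0 (π t) ⬝ᵥ r) θ
        - fderiv ℝ (fun t => (1 - γ) * (μ0 ⬝ᵥ (piMat (π t) *ᵥ q))) θ := by
  have hflow : (fun t => dOcc P γ μ0 (π t) ⬝ᵥ (r - psiMat P γ (π t) *ᵥ q))
      = fun t => dOcc P γ μ0 (π t) ⬝ᵥ r - (1 - γ) * (μ0 ⬝ᵥ (piMat (π t) *ᵥ q)) := by
    ext t
    rw [dotProduct_sub, dOcc_dotProduct_psiMat_mulVec hP (hpol t) hγ0 hγ1]
  have hJ : DifferentiableAt ℝ (fun t => (1 - γ) * (μ0 ⬝ᵥ (piMat (π t) *ᵥ q))) θ :=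
    (differentiableAt_dotProduct (differentiableAt_const μ0) (differentiableAt_mulVec
      (differentiableAt_piMat_apply hπ) (differentiableAt_const q))).const_mul _
  rw [hflow]
  exact fderiv_sub (differentiableAt_dotProduct
    (differentiableAt_dOcc hP hγ0 hγ1 μ0 (hpol θ) hπ) (differentiableAt_const r)) hJ

end MDP

theorem semi_stackelberg_gradient_is_policy_gradient_general
    (P : Matrix (S × A) S ℝ) (hP : IsStochasticMat P)
    (γ : ℝ) (hγ0 : 0 ≤ γ) (hγ1 : γ < 1)
    (r : S × A → ℝ) (μ0 : S → ℝ)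
    {n : ℕ} (π : (Fin n → ℝ) → S × A → ℝ)
    (hpol : ∀ θ, IsPolicy (π θ)) (hdiff : Differentiable ℝ π)
    (θ : Fin n → ℝ) (hμ0pos : ∀ s : S, 0 < μ0 s) (hπpos : ∀ p : S × A, 0 < π θ p)
    (q : S × A → ℝ) :
    ∀ i : Fin n,
      (fderiv ℝ (fun t => (1 - γ) * (μ0 ⬝ᵥ (piMat (π t) *ᵥ q))) θ (Pi.single i 1)
        - ((Matrix.of fun j p' =>
              fderiv ℝ
                (fun t => -(Matrix.diagonal (dOcc P γ μ0 (π t)) *ᵥ (r - psiMat P γ (π t) *ᵥ q)))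
                θ (Pi.single j 1) p')
            *ᵥ ((Matrix.diagonal (dOcc P γ μ0 (π θ)))⁻¹ *ᵥ dOcc P γ μ0 (π θ))) i
        = fderiv ℝ (fun t => (1 - γ) * (μ0 ⬝ᵥ (piMat (π t) *ᵥ q))) θ (Pi.single i 1)
          + fderiv ℝ (fun t => dOcc P γ μ0 (π t) ⬝ᵥ (r - psiMat P γ (π t) *ᵥ q)) θ
              (Pi.single i 1)) ∧
      (fderiv ℝ (fun t => (1 - γ) * (μ0 ⬝ᵥ (piMat (π t) *ᵥ q))) θ (Pi.single i 1)
        - ((Matrix.of fun j p' =>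
              fderiv ℝ
                (fun t => -(Matrix.diagonal (dOcc P γ μ0 (π t)) *ᵥ (r - psiMat P γ (π t) *ᵥ q)))
                θ (Pi.single j 1) p')
            *ᵥ ((Matrix.diagonal (dOcc P γ μ0 (π θ)))⁻¹ *ᵥ dOcc P γ μ0 (π θ))) i
        = fderiv ℝ (fun t => dOcc P γ μ0 (π t) ⬝ᵥ r) θ (Pi.single i 1)) := by
  intro i
  have hd := differentiableAt_dOcc hP hγ0 hγ1 μ0 (hpol θ) (hdiff θ)
  have hresid : DifferentiableAt ℝ (fun t => r - psiMat P γ (π t) *ᵥ q) θ :=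
    (differentiableAt_const r).sub (differentiableAt_mulVec
      (differentiableAt_psiMat_apply P γ (hdiff θ)) (differentiableAt_const q))
  rw [jacobian_neg_diagonal_mulVec_mulVec_inv_diagonal_self hd hresid
      fun p => (dOcc_pos hP (hpol θ) hγ0 hγ1 hπpos hμ0pos p).ne',
    fderiv_dOcc_dotProduct_sub_psiMat_mulVec hP hγ0 hγ1 r μ0 q hpol (hdiff θ)]
  simp only [_root_.sub_apply]
  constructor <;> abel

/-- semi-gradient Stackelberg gradient equals the policy gradient: with
full-support `μ0` and `π_θ`, the semi-gradient Stackelberg gradient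
`g^semi = ∂_θ J_π - M^semi ⬝ Δ(d_θ)⁻¹ ⬝ d_θ` (with `M^semi` the Jacobian in `θ` of
`θ ↦ -Δ(d_θ)(r - Ψ_θ q)`) equals `∂_θ J_π + ∇_θ(d_θᵀ(r - Ψ_θ q))`, the true policy
gradient `∇_θ J`. -/
theorem semi_stackelberg_gradient_is_policy_gradient
    (P : Matrix (S × A) S ℝ) (hP : IsStochasticMat P)
    (γ : ℝ) (hγ0 : 0 ≤ γ) (hγ1 : γ < 1)
    (r : S × A → ℝ) (μ0 : S → ℝ) (hμ0 : IsProbVec μ0)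
    {n : ℕ} (π : (Fin n → ℝ) → S × A → ℝ)
    (hpol : ∀ θ, IsPolicy (π θ)) (hdiff : Differentiable ℝ π)
    (θ : Fin n → ℝ) (hμ0pos : ∀ s : S, 0 < μ0 s) (hπpos : ∀ p : S × A, 0 < π θ p)
    (q : S × A → ℝ) :
    ∀ i : Fin n,
      (fderiv ℝ (fun t => (1 - γ) * (μ0 ⬝ᵥ (piMat (π t) *ᵥ q))) θ (Pi.single i 1)
        - ((Matrix.of fun j p' =>
              fderiv ℝ
                (fun t => -(Matrix.diagonal (dOcc P γ μ0 (π t)) *ᵥ (r - psiMat P γ (π t) *ᵥ q)))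
                θ (Pi.single j 1) p')
            *ᵥ ((Matrix.diagonal (dOcc P γ μ0 (π θ)))⁻¹ *ᵥ dOcc P γ μ0 (π θ))) i
        = fderiv ℝ (fun t => (1 - γ) * (μ0 ⬝ᵥ (piMat (π t) *ᵥ q))) θ (Pi.single i 1)
          + fderiv ℝ (fun t => dOcc P γ μ0 (π t) ⬝ᵥ (r - psiMat P γ (π t) *ᵥ q)) θ
              (Pi.single i 1)) ∧
      (fderiv ℝ (fun t => (1 - γ) * (μ0 ⬝ᵥ (piMat (π t) *ᵥ q))) θ (Pi.single i 1)
        - ((Matrix.of fun j p' =>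
              fderiv ℝ
                (fun t => -(Matrix.diagonal (dOcc P γ μ0 (π t)) *ᵥ (r - psiMat P γ (π t) *ᵥ q)))
                θ (Pi.single j 1) p')
            *ᵥ ((Matrix.diagonal (dOcc P γ μ0 (π θ)))⁻¹ *ᵥ dOcc P γ μ0 (π θ))) i
        = fderiv ℝ (fun t => dOcc P γ μ0 (π t) ⬝ᵥ r) θ (Pi.single i 1)) :=
  semi_stackelberg_gradient_is_policy_gradient_general P hP γ hγ0 hγ1 r μ0 π hpol hdiff θ hμ0pos
    hπpos q
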